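/- Let T be a tree rooted at its center and let k ≥ 0 be a branch-parameter. Then every k-fringe-tree of T has height at most k. -/
import Mathlib


/-- A rooted tree on a vertex type `V`, given by a parent function: the root is its
own parent and every vertex reaches the root by iterating `parent`. -/
structure RTree (V : Type*) where
  root : V
  parent : V → V
  parent_root : parent root = root
  reaches_root : ∀ v, ∃ n, parent^[n] v = root

namespace RTree

variable {V : Type*}

/-- The height of a vertex `v`: the maximum length of a (descending) path from `v`
to a descendant leaf (leaves have height `0`). -/
noncomputable def height (T : RTree V) (v : V) : ℕ :=
  sSup {n | ∃ u, T.parent^[n] u = v ∧ ∀ i < n, T.parent^[i] u ≠ v}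

/-- `v` is a (weak) ancestor of `u`. -/
def IsAncestor (T : RTree V) (v u : V) : Prop :=
  ∃ n, T.parent^[n] u = v

/-- `v` is a leaf: it has no children. -/
def IsLeaf (T : RTree V) (v : V) : Prop :=
  ∀ u, T.parent u = v → u = v

/-- A leaf `k`-branch: a non-root vertex of height exactly `k`. -/
def IsLeafBranch (T : RTree V) (k : ℕ) (v : V) : Prop :=
  v ≠ T.root ∧ T.height v = k

/-- A non-leaf `k`-branch: a vertex with at least two children of height `≥ k`. -/
def IsNonLeafBranch (T : RTree V) (k : ℕ) (v : V) : Prop :=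
  2 ≤ Nat.card {u | T.parent u = v ∧ u ≠ v ∧ k ≤ T.height u}

/-- A `k`-branch: a leaf `k`-branch or a non-leaf `k`-branch. -/
def IsBranch (T : RTree V) (k : ℕ) (v : V) : Prop :=
  T.IsLeafBranch k v ∨ T.IsNonLeafBranch k v

/-- `bl T k`: the number of leaf `k`-branches of `T`. -/
noncomputable def bl (T : RTree V) (k : ℕ) : ℕ :=
  Nat.card {v | T.IsLeafBranch k v}

/-- A `k`-internal vertex: a vertex of the `k`-branch-subtree, i.e. the root or a
vertex lying on the path from the root to some `k`-branch (a weak ancestor of a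
`k`-branch). -/
def KInternal (T : RTree V) (k : ℕ) (v : V) : Prop :=
  v = T.root ∨ ∃ w, T.IsBranch k w ∧ T.IsAncestor v w

/-- The `k`-branch-height `bh T k`: the maximum number of non-root `k`-branches
along a path from the root to a leaf. -/
noncomputable def bh (T : RTree V) (k : ℕ) : ℕ :=
  sSup {m | ∃ ℓ, T.IsLeaf ℓ ∧
    m = Nat.card {v | v ≠ T.root ∧ T.IsBranch k v ∧ T.IsAncestor v ℓ}}

/-- The graph distance between two vertices of the tree. -/
noncomputable def rdist (T : RTree V) (u v : V) : ℕ :=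
  sInf {m | ∃ a b, a + b = m ∧ T.parent^[a] u = T.parent^[b] v}

/-- The eccentricity of a vertex. -/
noncomputable def ecc (T : RTree V) (v : V) : ℕ :=
  sSup (Set.range (T.rdist v))

/-- The root of `T` is a center: it minimizes the eccentricity. -/
def RootedAtCenter (T : RTree V) : Prop :=
  ∀ w, T.ecc T.root ≤ T.ecc w

/-- `u` belongs to the `k`-fringe-tree rooted at the `k`-internal vertex `v`:
`v` is a weak ancestor of `u` and no vertex strictly below `v` on the path from
`u` up to `v` is `k`-internal. -/
def InFringe (T : RTree V) (k : ℕ) (v u : V) : Prop :=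
  T.KInternal k v ∧ ∃ n, T.parent^[n] u = v ∧
    ∀ i < n, ¬ T.KInternal k (T.parent^[i] u)

end RTree

namespace RTreeAux

open RTree

set_option linter.unusedSectionVars false

variable {V : Type*} [Finite V] (T : RTree V)

lemma root_fixed (n : ℕ) : T.parent^[n] T.root = T.root :=
  Function.iterate_fixed T.parent_root n

lemma eq_root_of_cycle {v : V} {p : ℕ} (hp : 0 < p) (h : T.parent^[p] v = v) :
    v = T.root := by
  obtain ⟨N, hN⟩ := T.reaches_root v
  have hper : ∀ q, T.parent^[p * q] v = v := by
    intro q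
    induction q with
    | zero => simp
    | succ q ih =>
      rw [Nat.mul_succ, Function.iterate_add_apply, h, ih]
  have hNle : N ≤ p * N := Nat.le_mul_of_pos_left N hp
  have key : T.parent^[p * N + p] v = T.root := by
    have h1 : p * N + p = (p * N + p - N) + N := by omega
    rw [h1, Function.iterate_add_apply, hN, root_fixed]
  have : T.parent^[p * N + p] v = v := by
    have : p * N + p = p * (N + 1) := by ring
    rw [this, hper]
  rw [← this, key]

lemma heightSet_bdd (v : V) :
    BddAbove {n | ∃ u, T.parent^[n] u = v ∧ ∀ i < n, T.parent^[i] u ≠ v} := by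
  refine ⟨Nat.card V, fun n hn => ?_⟩
  obtain ⟨u, hu, hne⟩ := hn
  by_contra hlt
  push_neg at hlt
  -- the map i ↦ parent^[i] u is injective on Fin (n+1)
  have hmain : ∀ i j : ℕ, i < j → j ≤ n → T.parent^[i] u ≠ T.parent^[j] u := by
    intro i j hij hjn heq
    have hcyc : T.parent^[j - i] (T.parent^[i] u) = T.parent^[i] u := by
      rw [← Function.iterate_add_apply, Nat.sub_add_cancel hij.le, ← heq]
    have hroot : T.parent^[i] u = T.root := eq_root_of_cycle T (by omega) hcyc
    have hnr : T.parent^[n] u = T.root := by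
      have h1 : n = (n - i) + i := by omega
      rw [h1, Function.iterate_add_apply, hroot, root_fixed]
    exact hne i (by omega) (by rw [hroot, ← hnr, hu])
  have hinj : Function.Injective (fun i : Fin (n + 1) => T.parent^[(i : ℕ)] u) := by
    intro i j hij
    simp only at hij
    rcases lt_trichotomy (i : ℕ) (j : ℕ) with h | h | h
    · exact absurd hij (hmain _ _ h (by omega))
    · exact Fin.ext h
    · exact absurd hij.symm (hmain _ _ h (by omega))
  have := Nat.card_le_card_of_injective _ hinj
  simp [Nat.card_eq_fintype_card] at this
  omega

lemma le_height {v : V} {n : ℕ} (u : V) (hu : T.parent^[n] u = v)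
    (hne : ∀ i < n, T.parent^[i] u ≠ v) : n ≤ T.height v :=
  le_csSup (heightSet_bdd T v) ⟨u, hu, hne⟩

lemma height_child_lt {c v : V} (hp : T.parent c = v) (hne : c ≠ v) :
    T.height c + 1 ≤ T.height v := by
  have hmem : T.height c ∈ {n | ∃ u, T.parent^[n] u = c ∧ ∀ i < n, T.parent^[i] u ≠ c} := by
    have hne0 : {n | ∃ u, T.parent^[n] u = c ∧ ∀ i < n, T.parent^[i] u ≠ c}.Nonempty :=
      ⟨0, c, by simp, fun i h => absurd h (by omega)⟩
    exact Nat.sSup_mem hne0 (heightSet_bdd T c)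
  obtain ⟨u, hu, hneu⟩ := hmem
  set m := T.height c with hm
  apply le_height T u
  · rw [Function.iterate_succ_apply', hu, hp]
  · intro i hi huv
    rcases Nat.lt_succ_iff_lt_or_eq.mp hi with h | h
    · have h1 : T.parent^[m - i] v = c := by
        rw [← huv, ← Function.iterate_add_apply, Nat.sub_add_cancel h.le, hu]
      have hcyc : T.parent^[(m - i) + 1] c = c := by
        rw [Function.iterate_succ_apply, hp, h1]
      have hcr : c = T.root := eq_root_of_cycle T (by omega) hcyc
      have hvr : v = T.root := by rw [← hp, hcr, T.parent_root]
      exact hne (hcr.trans hvr.symm)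
    · subst h; rw [hu] at huv; exact hne huv

lemma exists_exact_height {w : V} (hw : w ≠ T.root) {k : ℕ} (hk : k ≤ T.height w) :
    ∃ x, x ≠ T.root ∧ T.height x = k ∧ T.IsAncestor w x := by
  set m := T.height w with hm
  have hmem : m ∈ {n | ∃ u, T.parent^[n] u = w ∧ ∀ i < n, T.parent^[i] u ≠ w} := by
    have hne0 : {n | ∃ u, T.parent^[n] u = w ∧ ∀ i < n, T.parent^[i] u ≠ w}.Nonempty :=
      ⟨0, w, by simp, fun i h => absurd h (by omega)⟩
    exact Nat.sSup_mem hne0 (heightSet_bdd T w)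
  obtain ⟨u, hu, hneu⟩ := hmem
  have hnr : ∀ i ≤ m, T.parent^[i] u ≠ T.root := by
    intro i hi hir
    apply hw
    have h1 : m = (m - i) + i := by omega
    rw [← hu, h1, Function.iterate_add_apply, hir, root_fixed]
  have hlow : ∀ j ≤ m, j ≤ T.height (T.parent^[j] u) := by
    intro j hj
    apply le_height T u rfl
    intro i hi heq
    have hcyc : T.parent^[j - i] (T.parent^[i] u) = T.parent^[i] u := by
      rw [← Function.iterate_add_apply, Nat.sub_add_cancel hi.le, ← heq]
    exact hnr i (by omega) (eq_root_of_cycle T (by omega) hcyc)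
  have hchain : ∀ d j, j + d ≤ m → T.height (T.parent^[j] u) + d ≤ T.height (T.parent^[j + d] u) := by
    intro d
    induction d with
    | zero => simp
    | succ d ih =>
      intro j hj
      show T.height (T.parent^[j] u) + (d + 1) ≤ T.height (T.parent^[j + d + 1] u)
      have h1 := ih j (by omega)
      have hpc : T.parent (T.parent^[j + d] u) = T.parent^[j + d + 1] u :=
        (Function.iterate_succ_apply' _ _ _).symm
      have hne2 : T.parent^[j + d] u ≠ T.parent^[j + d + 1] u := by
        intro heq
        exact hnr (j + d) (by omega) (eq_root_of_cycle T (p := 1) (by omega)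
          (by rw [Function.iterate_one, hpc, ← heq]))
      have h2 := height_child_lt T hpc hne2
      omega
  have hup : ∀ j ≤ m, T.height (T.parent^[j] u) ≤ j := by
    intro j hj
    have := hchain (m - j) j (by omega)
    rw [Nat.add_sub_cancel' hj, hu, ← hm] at this
    omega
  refine ⟨T.parent^[k] u, hnr k hk, le_antisymm (hup k hk) (hlow k hk), m - k, ?_⟩
  rw [← Function.iterate_add_apply, Nat.sub_add_cancel hk, hu]

lemma kinternal_of_height_ge {w : V} {k : ℕ} (hw : w ≠ T.root) (hk : k ≤ T.height w) :
    T.KInternal k w := by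
  obtain ⟨x, hxr, hxh, hanc⟩ := exists_exact_height T hw hk
  exact Or.inr ⟨x, Or.inl ⟨hxr, hxh⟩, hanc⟩

end RTreeAux

/-- Let `T` be a tree rooted at its center and let `k ≥ 0` be a branch-parameter.
Then every `k`-fringe-tree of `T` has height at most `k`: any descending path of
length `n` from a `k`-internal vertex `v` into the `k`-external part satisfies
`n ≤ k`. -/
theorem fringe_tree_height_le_branchParam {V : Type*} [Finite V]
    (T : RTree V) (k : ℕ) (hc : T.RootedAtCenter) :
    ∀ (v u : V) (n : ℕ), T.KInternal k v → T.parent^[n] u = v →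
      (∀ i < n, ¬ T.KInternal k (T.parent^[i] u)) → n ≤ k := by
  intro v u n hv hu hni
  match n with
  | 0 => omega
  | j + 1 =>
    have hwni : ¬ T.KInternal k (T.parent^[j] u) := hni j (by omega)
    have hwr : T.parent^[j] u ≠ T.root := fun h => hwni (Or.inl h)
    have hj : j ≤ T.height (T.parent^[j] u) := by
      apply RTreeAux.le_height T u rfl
      intro i hi heq
      have hcyc : T.parent^[j - i] (T.parent^[i] u) = T.parent^[i] u := by
        rw [← Function.iterate_add_apply, Nat.sub_add_cancel hi.le, ← heq]
      rw [heq] at hcyc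
      exact hwr (RTreeAux.eq_root_of_cycle T (p := j - i) (by omega) hcyc)
    have hk2 : ¬ k ≤ T.height (T.parent^[j] u) := fun h =>
      hwni (RTreeAux.kinternal_of_height_ge T hwr h)
    omega
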